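/- arXiv:2511.15409 — 2 statements merged into one kernel-verified Lean document; each statement's English description precedes it below -/
import Mathlib

section
/- Tilted Gaussian second-moment identity: under the same setup as the first-moment identity, with Z(m) twice differentiable in m and differentiation under the integral valid, the covariance of q_{i+1}(x) = Z(m)^{-1} N(x|m,P)^β exp((1-β)V(x)) satisfies Cov_{q_{i+1}}[x] = (1/β) P + (1/β²) P (∇²_m log Z(m)) P. -/
open MeasureTheory Matrix

noncomputable def gaussianDensity {d : ℕ} (m : Fin d → ℝ) (P : Matrix (Fin d) (Fin d) ℝ)
    (x : Fin d → ℝ) : ℝ :=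
  (2 * Real.pi) ^ (-(d : ℝ) / 2) * P.det ^ (-(1 : ℝ) / 2) *
    Real.exp (-(1 / 2) * ((x - m) ⬝ᵥ (P⁻¹ *ᵥ (x - m))))

lemma diag_pos {d : ℕ} {A : Matrix (Fin d) (Fin d) ℝ} (hA : A.PosDef) (j : Fin d) : 0 < A j j := by
  exact hA.diag_pos

lemma quad_expand {d : ℕ} (A : Matrix (Fin d) (Fin d) ℝ) (hA : Aᵀ = A) (y : Fin d → ℝ) (j : Fin d) (s : ℝ) :
    (y + s • (Pi.single j 1 : Fin d → ℝ)) ⬝ᵥ (A *ᵥ (y + s • (Pi.single j 1 : Fin d → ℝ)))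
      = A j j * s ^ 2 + 2 * ((A *ᵥ y) j) * s + y ⬝ᵥ (A *ᵥ y) := by
  have h2 : y ⬝ᵥ (A *ᵥ (Pi.single j (1:ℝ))) = (A *ᵥ y) j := by
    rw [Matrix.dotProduct_mulVec, ← Matrix.mulVec_transpose, hA]
    simp [single_dotProduct]
  have h3 : (Pi.single j (1:ℝ)) ⬝ᵥ (A *ᵥ y) = (A *ᵥ y) j := by
    simp [single_dotProduct]
  have h4 : (Pi.single j (1:ℝ)) ⬝ᵥ (A *ᵥ (Pi.single j (1:ℝ))) = A j j := by
    simp [Matrix.mulVec_single, single_dotProduct]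
  simp only [Matrix.mulVec_add, Matrix.mulVec_smul, dotProduct_add, add_dotProduct,
    dotProduct_smul, smul_dotProduct, smul_eq_mul, h2, h3, h4]
  ring

lemma sub_update {d : ℕ} (x m' : Fin d → ℝ) (j : Fin d) (t : ℝ) :
    x - Function.update m' j t = (x - m') + (m' j - t) • (Pi.single j 1 : Fin d → ℝ) := by
  funext i
  by_cases h : i = j
  · subst h; simp [Function.update_self]
  · simp [Function.update_of_ne h, Pi.single_eq_of_ne h]

lemma tilt_eq {d : ℕ} (m' : Fin d → ℝ) (P : Matrix (Fin d) (Fin d) ℝ) (hP : P.PosDef)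
    (hPs : P⁻¹ᵀ = P⁻¹) (β : ℝ) (V : (Fin d → ℝ) → ℝ) (j : Fin d) (t : ℝ) (x : Fin d → ℝ) :
    gaussianDensity (Function.update m' j t) P x ^ β * Real.exp ((1 - β) * V x)
      = ((2 * Real.pi) ^ (-(d : ℝ) / 2) * P.det ^ (-(1 : ℝ) / 2)) ^ β *
        Real.exp (-(β/2) * (P⁻¹ j j * (m' j - t)^2 + 2*((P⁻¹ *ᵥ (x - m')) j)*(m' j - t)
          + (x - m') ⬝ᵥ (P⁻¹ *ᵥ (x - m')))) * Real.exp ((1 - β) * V x) := by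
  have hc : 0 < (2 * Real.pi) ^ (-(d : ℝ) / 2) * P.det ^ (-(1 : ℝ) / 2) :=
    mul_pos (Real.rpow_pos_of_pos (by positivity) _) (Real.rpow_pos_of_pos hP.det_pos _)
  rw [gaussianDensity, sub_update, quad_expand _ hPs,
    Real.mul_rpow hc.le (Real.exp_pos _).le,
    Real.rpow_def_of_pos (Real.exp_pos _), Real.log_exp]
  ring_nf

lemma tilt_hasDerivAt {d : ℕ} (m' : Fin d → ℝ) (P : Matrix (Fin d) (Fin d) ℝ) (hP : P.PosDef)
    (hPs : P⁻¹ᵀ = P⁻¹) (β : ℝ) (V : (Fin d → ℝ) → ℝ) (j : Fin d) (t : ℝ) (x : Fin d → ℝ) :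
    HasDerivAt (fun t => gaussianDensity (Function.update m' j t) P x ^ β * Real.exp ((1 - β) * V x))
      (β * ((P⁻¹ *ᵥ (x - Function.update m' j t)) j) *
        (gaussianDensity (Function.update m' j t) P x ^ β * Real.exp ((1 - β) * V x))) t := by
  have heq : ∀ s, gaussianDensity (Function.update m' j s) P x ^ β * Real.exp ((1 - β) * V x)
      = ((2 * Real.pi) ^ (-(d : ℝ) / 2) * P.det ^ (-(1 : ℝ) / 2)) ^ β *
        Real.exp (-(β/2) * (P⁻¹ j j * (m' j - s)^2 + 2*((P⁻¹ *ᵥ (x - m')) j)*(m' j - s)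
          + (x - m') ⬝ᵥ (P⁻¹ *ᵥ (x - m')))) * Real.exp ((1 - β) * V x) :=
    fun s => tilt_eq m' P hP hPs β V j s x
  set a := P⁻¹ j j
  set b := (P⁻¹ *ᵥ (x - m')) j
  set c := (x - m') ⬝ᵥ (P⁻¹ *ᵥ (x - m'))
  have h1 : HasDerivAt (fun s : ℝ => -(β/2) * (a * (m' j - s)^2 + 2*b*(m' j - s) + c))
      (-(β/2) * (a * (2 * (m' j - t) * (-1)) + 2*b*(-1))) t := by
    have hd : HasDerivAt (fun s : ℝ => m' j - s) (-1) t := by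
      simpa using (hasDerivAt_id t).const_sub (m' j)
    exact (((hd.pow 2).const_mul a).add ((hd.const_mul (2*b)))).add_const c |>.const_mul _ |>.congr_deriv (by ring)
  have h2 := ((h1.exp).const_mul (((2 * Real.pi) ^ (-(d : ℝ) / 2) * P.det ^ (-(1 : ℝ) / 2)) ^ β)).mul_const (Real.exp ((1 - β) * V x))
  have hv : (P⁻¹ *ᵥ (x - Function.update m' j t)) j = b + (m' j - t) * a := by
    rw [sub_update, Matrix.mulVec_add, Matrix.mulVec_smul]
    simp [Matrix.mulVec_single, b, a, mul_comm]
  rw [funext heq] -- rewrite the function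
  refine h2.congr_deriv ?_
  · rw [heq t, hv]; ring

lemma exp_quad_bound (a b c s β : ℝ) (ha : 0 ≤ a) (hβ : 0 ≤ β) (hs : |s| ≤ 1) :
    Real.exp (-(β/2) * (a*s^2 + 2*b*s + c)) ≤
      Real.exp (β*a/2) * (Real.exp (-(β/2)*(a - 2*b + c)) + Real.exp (-(β/2)*(a + 2*b + c))) := by
  rw [abs_le] at hs
  rcases le_total 0 b with hb | hb
  · calc Real.exp (-(β/2) * (a*s^2 + 2*b*s + c))
        ≤ Real.exp (β*a/2) * Real.exp (-(β/2)*(a - 2*b + c)) := by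
          rw [← Real.exp_add, Real.exp_le_exp]
          nlinarith [mul_nonneg hβ (mul_nonneg ha (sq_nonneg s)), mul_nonneg hβ (mul_nonneg hb (by linarith : (0:ℝ) ≤ s + 1))]
      _ ≤ _ := by
          have := Real.exp_nonneg (-(β/2)*(a + 2*b + c))
          have := Real.exp_nonneg (β*a/2)
          nlinarith
  · calc Real.exp (-(β/2) * (a*s^2 + 2*b*s + c))
        ≤ Real.exp (β*a/2) * Real.exp (-(β/2)*(a + 2*b + c)) := by
          rw [← Real.exp_add, Real.exp_le_exp]
          nlinarith [mul_nonneg hβ (mul_nonneg ha (sq_nonneg s)), mul_nonneg hβ (mul_nonneg (neg_nonneg.2 hb) (by linarith : (0:ℝ) ≤ 1 - s))]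
      _ ≤ _ := by
          have := Real.exp_nonneg (-(β/2)*(a - 2*b + c))
          have := Real.exp_nonneg (β*a/2)
          nlinarith

lemma tilt_bound {d : ℕ} (m' : Fin d → ℝ) (P : Matrix (Fin d) (Fin d) ℝ) (hP : P.PosDef)
    (hPs : P⁻¹ᵀ = P⁻¹) (β : ℝ) (hβ : 0 ≤ β) (V : (Fin d → ℝ) → ℝ) (j : Fin d) (t : ℝ)
    (ht : |m' j - t| ≤ 1) (x : Fin d → ℝ) :
    gaussianDensity (Function.update m' j t) P x ^ β * Real.exp ((1 - β) * V x) ≤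
      Real.exp (β * P⁻¹ j j / 2) *
        (gaussianDensity (Function.update m' j (m' j - 1)) P x ^ β * Real.exp ((1 - β) * V x)
          + gaussianDensity (Function.update m' j (m' j + 1)) P x ^ β * Real.exp ((1 - β) * V x)) := by
  have ha : 0 ≤ P⁻¹ j j := (diag_pos hP.inv j).le
  rw [tilt_eq m' P hP hPs β V j t x, tilt_eq m' P hP hPs β V j (m' j - 1) x,
    tilt_eq m' P hP hPs β V j (m' j + 1) x]
  set a := P⁻¹ j j
  set b := (P⁻¹ *ᵥ (x - m')) j
  set c := (x - m') ⬝ᵥ (P⁻¹ *ᵥ (x - m'))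
  set C := ((2 * Real.pi) ^ (-(d : ℝ) / 2) * P.det ^ (-(1 : ℝ) / 2)) ^ β with hC
  set E := Real.exp ((1 - β) * V x)
  have hCE : 0 ≤ C * E := mul_nonneg (Real.rpow_nonneg (mul_nonneg (Real.rpow_nonneg (by positivity) _) (Real.rpow_nonneg hP.det_pos.le _)) _) (Real.exp_pos _).le
  have hq := exp_quad_bound a b c (m' j - t) β ha hβ ht
  have h1 : a * (m' j - (m' j - 1))^2 + 2*b*(m' j - (m' j - 1)) + c = a + 2*b + c := by ring
  have h2 : a * (m' j - (m' j + 1))^2 + 2*b*(m' j - (m' j + 1)) + c = a - 2*b + c := by ring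
  rw [h1, h2]
  calc C * Real.exp (-(β/2) * (a * (m' j - t)^2 + 2*b*(m' j - t) + c)) * E
      = (C * E) * Real.exp (-(β/2) * (a * (m' j - t)^2 + 2*b*(m' j - t) + c)) := by ring
    _ ≤ (C * E) * (Real.exp (β*a/2) * (Real.exp (-(β/2)*(a - 2*b + c)) + Real.exp (-(β/2)*(a + 2*b + c)))) :=
        mul_le_mul_of_nonneg_left hq hCE
    _ = Real.exp (β * a / 2) * (C * Real.exp (-(β/2) * (a + 2*b + c)) * E + C * Real.exp (-(β/2) * (a - 2*b + c)) * E) := by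
        ring

lemma meas_tilt {d : ℕ} (m' : Fin d → ℝ) (P : Matrix (Fin d) (Fin d) ℝ) (β : ℝ)
    {V : (Fin d → ℝ) → ℝ} (hV : Measurable V) :
    Measurable (fun x => gaussianDensity m' P x ^ β * Real.exp ((1 - β) * V x)) := by
  unfold gaussianDensity
  simp only [dotProduct, Matrix.mulVec]
  measurability

lemma meas_coord {d : ℕ} (m' : Fin d → ℝ) (P : Matrix (Fin d) (Fin d) ℝ) (j : Fin d) :
    Measurable (fun x : Fin d → ℝ => (P⁻¹ *ᵥ (x - m')) j) := by
  simp only [Matrix.mulVec, dotProduct]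
  measurability

lemma tilt_nonneg {d : ℕ} (m' : Fin d → ℝ) {P : Matrix (Fin d) (Fin d) ℝ} (hP : P.PosDef) (β : ℝ)
    (V : (Fin d → ℝ) → ℝ) (x : Fin d → ℝ) :
    0 ≤ gaussianDensity m' P x ^ β * Real.exp ((1 - β) * V x) := by
  apply mul_nonneg _ (Real.exp_pos _).le
  apply Real.rpow_nonneg
  unfold gaussianDensity
  have := hP.det_pos
  positivity

lemma integrable_weight {d : ℕ} {m' : Fin d → ℝ} {P : Matrix (Fin d) (Fin d) ℝ} (hP : P.PosDef)
    {β : ℝ} {V : (Fin d → ℝ) → ℝ} (hV : Measurable V)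
    (hmom : Integrable fun x =>
      gaussianDensity m' P x ^ β * Real.exp ((1 - β) * V x) * (1 + ‖x‖ ^ 2))
    {u : (Fin d → ℝ) → ℝ} (hu : Measurable u) {c : ℝ}
    (huc : ∀ x, |u x| ≤ c * (1 + ‖x‖ ^ 2)) :
    Integrable fun x => gaussianDensity m' P x ^ β * Real.exp ((1 - β) * V x) * u x := by
  refine (hmom.const_mul c).mono (((meas_tilt m' P β hV).mul hu).aestronglyMeasurable)
    (Filter.Eventually.of_forall fun x => ?_)
  have hg := tilt_nonneg m' hP β V x
  have hx : (0:ℝ) ≤ 1 + ‖x‖ ^ 2 := by positivity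
  have h1 : |u x| ≤ c * (1 + ‖x‖ ^ 2) := huc x
  have hc : 0 ≤ c := by
    have := (abs_nonneg (u x)).trans h1
    nlinarith
  rw [Real.norm_eq_abs, Real.norm_eq_abs, abs_mul, abs_of_nonneg hg, abs_mul,
    abs_of_nonneg hc, abs_of_nonneg (mul_nonneg hg hx)]
  calc gaussianDensity m' P x ^ β * Real.exp ((1 - β) * V x) * |u x|
      ≤ gaussianDensity m' P x ^ β * Real.exp ((1 - β) * V x) * (c * (1 + ‖x‖ ^ 2)) := by
        exact mul_le_mul_of_nonneg_left h1 hg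
    _ = c * (gaussianDensity m' P x ^ β * Real.exp ((1 - β) * V x) * (1 + ‖x‖ ^ 2)) := by ring

open Metric in
set_option maxHeartbeats 2000000 in
lemma key_deriv {d : ℕ} {P : Matrix (Fin d) (Fin d) ℝ} (hP : P.PosDef) (hPs : P⁻¹ᵀ = P⁻¹)
    {β : ℝ} (hβ0 : 0 < β) {V : (Fin d → ℝ) → ℝ} (hV : Measurable V)
    (hmom : ∀ m', Integrable fun x =>
      gaussianDensity m' P x ^ β * Real.exp ((1 - β) * V x) * (1 + ‖x‖ ^ 2))
    (m' : Fin d → ℝ) (j : Fin d) (w : (Fin d → ℝ) → ℝ) (hw : Measurable w)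
    (hwb : ∀ x, |w x| ≤ 1 + ‖x‖) :
    HasDerivAt (fun t => ∫ x, gaussianDensity (Function.update m' j t) P x ^ β *
        Real.exp ((1 - β) * V x) * w x)
      (∫ x, β * ((P⁻¹ *ᵥ (x - m')) j) *
        (gaussianDensity m' P x ^ β * Real.exp ((1 - β) * V x)) * w x) (m' j) := by
  classical
  set g : (Fin d → ℝ) → (Fin d → ℝ) → ℝ :=
    fun mm x => gaussianDensity mm P x ^ β * Real.exp ((1 - β) * V x) with hg
  set K : ℝ := ∑ k, |P⁻¹ j k| with hK
  have hK0 : 0 ≤ K := Finset.sum_nonneg fun k _ => abs_nonneg _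
  set M : ℝ := ‖m'‖ with hM
  have hM0 : 0 ≤ M := norm_nonneg _
  set Eex : ℝ := Real.exp (β * P⁻¹ j j / 2) with hEex
  set C : ℝ := β * K * (2 * (M + 2)) * Eex with hC2
  have hC0 : 0 ≤ C := by positivity
  set gm : (Fin d → ℝ) → ℝ := g (Function.update m' j (m' j - 1)) with hgm
  set gp : (Fin d → ℝ) → ℝ := g (Function.update m' j (m' j + 1)) with hgp
  have key := hasDerivAt_integral_of_dominated_loc_of_deriv_le (μ := volume)
    (F := fun t x => g (Function.update m' j t) x * w x)
    (F' := fun t x => β * ((P⁻¹ *ᵥ (x - Function.update m' j t)) j) *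
      g (Function.update m' j t) x * w x)
    (x₀ := m' j)
    (bound := fun x => C * (gm x * (1 + ‖x‖ ^ 2)) + C * (gp x * (1 + ‖x‖ ^ 2)))
    (s := Metric.ball (m' j) 1) (Metric.ball_mem_nhds _ one_pos)
    (Filter.Eventually.of_forall fun t =>
      (((meas_tilt _ P β hV).mul hw).aestronglyMeasurable))
    ?_ ?_ ?_ ?_ ?_
  · have h2 := key.2
    simp only [Function.update_eq_self] at h2
    exact h2
  · -- integrability of F x₀
    simp only [Function.update_eq_self]
    exact integrable_weight hP hV (hmom m') hw (c := 2) (fun x => by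
      have := hwb x; have h : ‖x‖ ≤ 1 + ‖x‖^2 := by nlinarith [sq_nonneg (‖x‖ - 1), norm_nonneg x]
      nlinarith [norm_nonneg x])
  · -- measurability of F' x₀
    exact (((measurable_const.mul (meas_coord (Function.update m' j (m' j)) P j)).mul
      (meas_tilt _ P β hV)).mul hw).aestronglyMeasurable
  · -- the bound
    refine Filter.Eventually.of_forall fun x => fun t ht => ?_
    have htt : |m' j - t| ≤ 1 := by
      rw [Metric.mem_ball, Real.dist_eq] at ht
      rw [abs_sub_comm]; exact ht.le
    have hgnn := tilt_nonneg (Function.update m' j t) hP β V x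
    have hgb : g (Function.update m' j t) x ≤ Eex * (gm x + gp x) :=
      tilt_bound m' P hP hPs β hβ0.le V j t htt x
    have hvb : ∀ k, |x k - Function.update m' j t k| ≤ ‖x‖ + M + 1 := by
      intro k
      by_cases hk : k = j
      · subst hk
        simp only [Function.update_self]
        have h1 : |x k| ≤ ‖x‖ := by
          rw [← Real.norm_eq_abs]; exact norm_le_pi_norm x k
        have h2 : |t| ≤ |m' k| + 1 := by
          have := abs_sub_abs_le_abs_sub t (m' k)
          rw [abs_sub_comm] at htt
          calc |t| ≤ |m' k| + |t - m' k| := by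
                have := abs_sub (t) (m' k); nlinarith [abs_sub_abs_le_abs_sub t (m' k)]
            _ ≤ |m' k| + 1 := by linarith
        have h3 : |m' k| ≤ M := by rw [hM, ← Real.norm_eq_abs]; exact norm_le_pi_norm m' k
        calc |x k - t| ≤ |x k| + |t| := abs_sub _ _
          _ ≤ ‖x‖ + M + 1 := by linarith
      · simp only [Function.update_of_ne hk]
        have h1 : |x k| ≤ ‖x‖ := by rw [← Real.norm_eq_abs]; exact norm_le_pi_norm x k
        have h3 : |m' k| ≤ M := by rw [hM, ← Real.norm_eq_abs]; exact norm_le_pi_norm m' k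
        calc |x k - m' k| ≤ |x k| + |m' k| := abs_sub _ _
          _ ≤ ‖x‖ + M + 1 := by linarith
    have hAv : |(P⁻¹ *ᵥ (x - Function.update m' j t)) j| ≤ K * (‖x‖ + M + 1) := by
      have h0 : (P⁻¹ *ᵥ (x - Function.update m' j t)) j
          = ∑ k, P⁻¹ j k * (x k - Function.update m' j t k) := by
        simp [Matrix.mulVec, dotProduct]
      rw [h0]
      calc |∑ k, P⁻¹ j k * (x k - Function.update m' j t k)|
          ≤ ∑ k, |P⁻¹ j k * (x k - Function.update m' j t k)| := Finset.abs_sum_le_sum_abs _ _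
        _ ≤ ∑ k, |P⁻¹ j k| * (‖x‖ + M + 1) := by
            refine Finset.sum_le_sum fun k _ => ?_
            rw [abs_mul]
            exact mul_le_mul_of_nonneg_left (hvb k) (abs_nonneg _)
        _ = K * (‖x‖ + M + 1) := by rw [hK, Finset.sum_mul]
    have hwx := hwb x
    have hgmnn : 0 ≤ gm x := tilt_nonneg _ hP β V x
    have hgpnn : 0 ≤ gp x := tilt_nonneg _ hP β V x
    rw [Real.norm_eq_abs, abs_mul, abs_mul, abs_mul, abs_of_pos hβ0, abs_of_nonneg hgnn]
    have hX : (0:ℝ) ≤ ‖x‖ := norm_nonneg _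
    have hpoly : (‖x‖ + M + 1) * (1 + ‖x‖) ≤ 2 * (M + 2) * (1 + ‖x‖ ^ 2) := by
      nlinarith [sq_nonneg (‖x‖ - 1), mul_nonneg hM0 (sq_nonneg (‖x‖ - 1))]
    calc β * |(P⁻¹ *ᵥ (x - Function.update m' j t)) j| * g (Function.update m' j t) x * |w x|
        ≤ β * (K * (‖x‖ + M + 1)) * (Eex * (gm x + gp x)) * (1 + ‖x‖) := by
          gcongr
          all_goals first
            | positivity
            | exact hgnn
            | exact hAv
            | exact hgb
            | exact hwx
            | linarith [hwx, abs_nonneg (w x)]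
      _ ≤ C * (gm x * (1 + ‖x‖ ^ 2)) + C * (gp x * (1 + ‖x‖ ^ 2)) := by
          have h5 : β * (K * (‖x‖ + M + 1)) * (Eex * (gm x + gp x)) * (1 + ‖x‖)
              = (β * K * Eex * (gm x + gp x)) * ((‖x‖ + M + 1) * (1 + ‖x‖)) := by ring
          have h6 : 0 ≤ β * K * Eex * (gm x + gp x) := by positivity
          rw [h5]
          calc (β * K * Eex * (gm x + gp x)) * ((‖x‖ + M + 1) * (1 + ‖x‖))
              ≤ (β * K * Eex * (gm x + gp x)) * (2 * (M + 2) * (1 + ‖x‖ ^ 2)) :=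
                mul_le_mul_of_nonneg_left hpoly h6
            _ = C * (gm x * (1 + ‖x‖ ^ 2)) + C * (gp x * (1 + ‖x‖ ^ 2)) := by rw [hC2]; ring
  · -- bound integrable
    exact ((hmom _).const_mul C).add ((hmom _).const_mul C)
  · -- pointwise differentiability
    refine Filter.Eventually.of_forall fun x => fun t _ => ?_
    exact (tilt_hasDerivAt m' P hP hPs β V j t x).mul_const (w x)

lemma sum_helper {d : ℕ} (a b : ℝ) (f g : Fin d → ℝ) :
    a * ∑ l, f l - b * ∑ l, g l = ∑ l, (a * f l - b * g l) := by
  rw [Finset.mul_sum, Finset.mul_sum, Finset.sum_sub_distrib]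

lemma final_algebra {d : ℕ} (A : Matrix (Fin d) (Fin d) ℝ) (m F : Fin d → ℝ)
    (T : Fin d → Fin d → ℝ) (Zm : ℝ) (DZ : ℝ) (DF : Fin d → ℝ) (j k : Fin d)
    (hZm : Zm ≠ 0) (β : ℝ)
    (hDZ : DZ = β * ∑ p, A k p * (F p - m p * Zm))
    (hDF : ∀ l, DF l = β * ∑ p, A k p * (T p l - m p * F l)) :
    ((β * ∑ l, A j l * (DF l - ((if l = k then (1:ℝ) else 0) * Zm + m l * DZ))) * Zm
      - (β * ∑ l, A j l * (F l - m l * Zm)) * DZ) / Zm ^ 2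
    = β ^ 2 * (∑ l, A j l * (∑ p, A k p * (Zm⁻¹ * T p l - (Zm⁻¹ * F p) * (Zm⁻¹ * F l))))
      - β * A j k := by
  have key : ∀ l, (A j l * (DF l - ((if l = k then (1:ℝ) else 0) * Zm + m l * DZ))) * Zm
      - (A j l * (F l - m l * Zm)) * DZ
      = β * Zm ^ 2 * (A j l * ∑ p, A k p * (Zm⁻¹ * T p l - (Zm⁻¹ * F p) * (Zm⁻¹ * F l)))
        - (if l = k then (1:ℝ) else 0) * Zm ^ 2 * A j l := by
    intro l
    have h1 : Zm * DF l - F l * DZ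
        = β * ∑ p, (Zm * (A k p * (T p l - m p * F l)) - F l * (A k p * (F p - m p * Zm))) := by
      rw [hDF l, hDZ]
      calc Zm * (β * ∑ p, A k p * (T p l - m p * F l))
            - F l * (β * ∑ p, A k p * (F p - m p * Zm))
          = (Zm * β) * (∑ p, A k p * (T p l - m p * F l))
            - (F l * β) * (∑ p, A k p * (F p - m p * Zm)) := by ring
        _ = ∑ p, ((Zm * β) * (A k p * (T p l - m p * F l))
            - (F l * β) * (A k p * (F p - m p * Zm))) := sum_helper _ _ _ _
        _ = β * ∑ p, (Zm * (A k p * (T p l - m p * F l))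
            - F l * (A k p * (F p - m p * Zm))) := by
            rw [Finset.mul_sum]; exact Finset.sum_congr rfl fun p _ => by ring
    have h2 : (∑ p, (Zm * (A k p * (T p l - m p * F l)) - F l * (A k p * (F p - m p * Zm))))
        = Zm ^ 2 * ∑ p, A k p * (Zm⁻¹ * T p l - (Zm⁻¹ * F p) * (Zm⁻¹ * F l)) := by
      rw [Finset.mul_sum]
      exact Finset.sum_congr rfl fun p _ => by field_simp; ring
    have h3 : (A j l * (DF l - ((if l = k then (1:ℝ) else 0) * Zm + m l * DZ))) * Zm
        - (A j l * (F l - m l * Zm)) * DZ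
        = A j l * (Zm * DF l - F l * DZ) - (if l = k then (1:ℝ) else 0) * Zm ^ 2 * A j l := by
      ring
    rw [h3, h1, h2]; ring
  have hnum : (β * ∑ l, A j l * (DF l - ((if l = k then (1:ℝ) else 0) * Zm + m l * DZ))) * Zm
      - (β * ∑ l, A j l * (F l - m l * Zm)) * DZ
      = β * ∑ l, ((A j l * (DF l - ((if l = k then (1:ℝ) else 0) * Zm + m l * DZ))) * Zm
          - (A j l * (F l - m l * Zm)) * DZ) := by
    calc (β * ∑ l, A j l * (DF l - ((if l = k then (1:ℝ) else 0) * Zm + m l * DZ))) * Zm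
          - (β * ∑ l, A j l * (F l - m l * Zm)) * DZ
        = (Zm * β) * (∑ l, A j l * (DF l - ((if l = k then (1:ℝ) else 0) * Zm + m l * DZ)))
          - (DZ * β) * (∑ l, A j l * (F l - m l * Zm)) := by ring
      _ = ∑ l, ((Zm * β) * (A j l * (DF l - ((if l = k then (1:ℝ) else 0) * Zm + m l * DZ)))
          - (DZ * β) * (A j l * (F l - m l * Zm))) := sum_helper _ _ _ _
      _ = β * ∑ l, ((A j l * (DF l - ((if l = k then (1:ℝ) else 0) * Zm + m l * DZ))) * Zm
          - (A j l * (F l - m l * Zm)) * DZ) := by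
          rw [Finset.mul_sum]; exact Finset.sum_congr rfl fun l _ => by ring
  rw [hnum, Finset.sum_congr rfl fun l _ => key l, Finset.sum_sub_distrib]
  have h4 : (∑ l, (if l = k then (1:ℝ) else 0) * Zm ^ 2 * A j l) = Zm ^ 2 * A j k := by
    rw [Finset.sum_eq_single k]
    · simp
    · intro b _ hb; simp [hb]
    · intro h; exact absurd (Finset.mem_univ k) h
  rw [h4, ← Finset.mul_sum]
  field_simp

set_option maxHeartbeats 2000000 in
/-- Tilted Gaussian second-moment identity: the covariance of the tilted density
`q'(x) = Z(m)⁻¹ N(x|m,P)^β exp((1-β)V(x))` is `(1/β) P + (1/β²) P (∇²ₘ log Z(m)) P`. -/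
theorem stmt3 {d : ℕ} (m : Fin d → ℝ) (P : Matrix (Fin d) (Fin d) ℝ) (hP : P.PosDef)
    (hPs : P.IsSymm)
    (V : (Fin d → ℝ) → ℝ) (hV : Measurable V)
    (β : ℝ) (hβ : β ∈ Set.Ioo (0 : ℝ) 1)
    (Z : (Fin d → ℝ) → ℝ)
    (hZ : ∀ m', Z m' = ∫ x, gaussianDensity m' P x ^ β * Real.exp ((1 - β) * V x))
    (hZpos : ∀ m', 0 < Z m')
    (hZint : ∀ m', Integrable fun x => gaussianDensity m' P x ^ β * Real.exp ((1 - β) * V x))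
    (hmom : ∀ m', Integrable fun x =>
      gaussianDensity m' P x ^ β * Real.exp ((1 - β) * V x) * (1 + ‖x‖ ^ 2))
    -- differentiation under the integral (twice) is valid: gradient field `G` and Hessian `H`
    (G : (Fin d → ℝ) → Fin d → ℝ)
    (hG : ∀ m' j, HasDerivAt (fun t => Real.log (Z (Function.update m' j t))) (G m' j) (m' j))
    (H : Matrix (Fin d) (Fin d) ℝ)
    (hH : ∀ j k, HasDerivAt (fun t => G (Function.update m k t) j) (H j k) (m k))
    (μ : Fin d → ℝ)
    (hμ : ∀ j, μ j = ∫ x, (Z m)⁻¹ * (gaussianDensity m P x ^ β * Real.exp ((1 - β) * V x)) * x j) :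
    (Matrix.of fun j k => ∫ x, (Z m)⁻¹ * (gaussianDensity m P x ^ β * Real.exp ((1 - β) * V x))
        * ((x j - μ j) * (x k - μ k)))
      = (1 / β) • P + (1 / β ^ 2) • (P * H * P) := by
  classical
  obtain ⟨hβ0, hβ1⟩ := hβ
  have hβn : β ≠ 0 := ne_of_gt hβ0
  have hPs' : P⁻¹ᵀ = P⁻¹ := by
    rw [Matrix.transpose_nonsing_inv, hPs.eq]
  have hAsym : ∀ a b : Fin d, P⁻¹ a b = P⁻¹ b a := by
    intro a b; conv_lhs => rw [← hPs', Matrix.transpose_apply]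
  -- basic integrability
  have hIw : ∀ (mm : Fin d → ℝ) (u : (Fin d → ℝ) → ℝ), Measurable u → ∀ c : ℝ,
      (∀ x, |u x| ≤ c * (1 + ‖x‖ ^ 2)) →
      Integrable fun x => gaussianDensity mm P x ^ β * Real.exp ((1 - β) * V x) * u x :=
    fun mm u hu c huc => integrable_weight hP hV (hmom mm) hu huc
  have hxle : ∀ x : Fin d → ℝ, ∀ l, |x l| ≤ 1 * (1 + ‖x‖ ^ 2) := by
    intro x l
    have h1 : |x l| ≤ ‖x‖ := by rw [← Real.norm_eq_abs]; exact norm_le_pi_norm x l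
    nlinarith [sq_nonneg (‖x‖ - 1), norm_nonneg x]
  have hxxle : ∀ x : Fin d → ℝ, ∀ l p, |x l * x p| ≤ 1 * (1 + ‖x‖ ^ 2) := by
    intro x l p
    have h1 : |x l| ≤ ‖x‖ := by rw [← Real.norm_eq_abs]; exact norm_le_pi_norm x l
    have h2 : |x p| ≤ ‖x‖ := by rw [← Real.norm_eq_abs]; exact norm_le_pi_norm x p
    rw [abs_mul]
    nlinarith [abs_nonneg (x l), abs_nonneg (x p), norm_nonneg x]
  have hIx : ∀ (mm : Fin d → ℝ) l, Integrable fun x =>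
      gaussianDensity mm P x ^ β * Real.exp ((1 - β) * V x) * x l :=
    fun mm l => hIw mm _ (measurable_pi_apply l) 1 (fun x => hxle x l)
  have hIxx : ∀ (mm : Fin d → ℝ) l p, Integrable fun x =>
      gaussianDensity mm P x ^ β * Real.exp ((1 - β) * V x) * (x l * x p) :=
    fun mm l p => hIw mm _ ((measurable_pi_apply l).mul (measurable_pi_apply p)) 1
      (fun x => hxxle x l p)
  -- derivative of Z along coordinate
  have hZder : ∀ (mm : Fin d → ℝ) (k : Fin d), HasDerivAt (fun t => Z (Function.update mm k t))
      (∫ x, β * ((P⁻¹ *ᵥ (x - mm)) k) *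
        (gaussianDensity mm P x ^ β * Real.exp ((1 - β) * V x)) * 1) (mm k) := by
    intro mm k
    have h := key_deriv hP hPs' hβ0 hV hmom mm k (fun _ => 1) measurable_const
      (fun x => by rw [abs_one]; linarith [norm_nonneg x])
    have e : (fun t => Z (Function.update mm k t)) = fun t => ∫ x,
        gaussianDensity (Function.update mm k t) P x ^ β * Real.exp ((1 - β) * V x) * 1 := by
      funext t; rw [hZ]; simp only [mul_one]
    rw [e]; exact h
  -- formula for G
  have hGfor : ∀ (mm : Fin d → ℝ) (k : Fin d), G mm k =
      (∫ x, β * ((P⁻¹ *ᵥ (x - mm)) k) *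
        (gaussianDensity mm P x ^ β * Real.exp ((1 - β) * V x)) * 1) / Z mm := by
    intro mm k
    refine (hG mm k).unique ?_
    have h := (hZder mm k).log (by simp only [Function.update_eq_self]; exact (hZpos mm).ne')
    simpa only [Function.update_eq_self] using h
  -- generic splitting of the derivative integrand
  have hsplitgen : ∀ (mm : Fin d → ℝ) (k : Fin d) (w : (Fin d → ℝ) → ℝ),
      (∀ p, Integrable fun x => gaussianDensity mm P x ^ β * Real.exp ((1 - β) * V x) *
        ((x p - mm p) * w x)) →
      (∫ x, β * ((P⁻¹ *ᵥ (x - mm)) k) *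
          (gaussianDensity mm P x ^ β * Real.exp ((1 - β) * V x)) * w x)
        = β * ∑ p, P⁻¹ k p * ∫ x, gaussianDensity mm P x ^ β * Real.exp ((1 - β) * V x) *
            ((x p - mm p) * w x) := by
    intro mm k w hInt
    have e : (fun x => β * ((P⁻¹ *ᵥ (x - mm)) k) *
        (gaussianDensity mm P x ^ β * Real.exp ((1 - β) * V x)) * w x)
        = fun x => ∑ p, (β * P⁻¹ k p) * (gaussianDensity mm P x ^ β * Real.exp ((1 - β) * V x) *
            ((x p - mm p) * w x)) := by
      funext x
      simp only [Matrix.mulVec, dotProduct, Pi.sub_apply]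
      rw [Finset.mul_sum, Finset.sum_mul, Finset.sum_mul]
      exact Finset.sum_congr rfl fun p _ => by ring
    rw [e, integral_finset_sum _ (fun p _ => (hInt p).const_mul _), Finset.mul_sum]
    exact Finset.sum_congr rfl fun p _ => by
      rw [integral_const_mul]; ring
  -- value of the Z-derivative integral
  have hDZval : ∀ (mm : Fin d → ℝ) (k : Fin d),
      (∫ x, β * ((P⁻¹ *ᵥ (x - mm)) k) *
          (gaussianDensity mm P x ^ β * Real.exp ((1 - β) * V x)) * 1)
        = β * ∑ p, P⁻¹ k p *
            ((∫ x, gaussianDensity mm P x ^ β * Real.exp ((1 - β) * V x) * x p) - mm p * Z mm) := by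
    intro mm k
    rw [hsplitgen mm k (fun _ => 1) (fun p => by
      refine hIw mm _ (((measurable_pi_apply p).sub measurable_const).mul measurable_const)
        (‖mm‖ + 1) fun x => ?_
      have h1 : |x p| ≤ ‖x‖ := by rw [← Real.norm_eq_abs]; exact norm_le_pi_norm x p
      have h2 : |mm p| ≤ ‖mm‖ := by rw [← Real.norm_eq_abs]; exact norm_le_pi_norm mm p
      have h3 : |(x p - mm p) * 1| ≤ ‖x‖ + ‖mm‖ := by
        rw [mul_one]
        calc |x p - mm p| ≤ |x p| + |mm p| := abs_sub _ _
          _ ≤ ‖x‖ + ‖mm‖ := by linarith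
      nlinarith [norm_nonneg x, norm_nonneg mm, sq_nonneg (‖x‖ - 1), sq_nonneg ‖x‖])]
    congr 1
    refine Finset.sum_congr rfl fun p _ => ?_
    congr 1
    have e2 : (fun x => gaussianDensity mm P x ^ β * Real.exp ((1 - β) * V x) * ((x p - mm p) * 1))
        = fun x => gaussianDensity mm P x ^ β * Real.exp ((1 - β) * V x) * x p
          - mm p * (gaussianDensity mm P x ^ β * Real.exp ((1 - β) * V x)) := by
      funext x; ring
    rw [e2, integral_sub (hIx mm p) ((hZint mm).const_mul (mm p)), integral_const_mul, ← hZ]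
  -- value of the F-derivative integral
  have hDFval : ∀ (k l : Fin d),
      (∫ x, β * ((P⁻¹ *ᵥ (x - m)) k) *
          (gaussianDensity m P x ^ β * Real.exp ((1 - β) * V x)) * x l)
        = β * ∑ p, P⁻¹ k p *
            ((∫ x, gaussianDensity m P x ^ β * Real.exp ((1 - β) * V x) * (x p * x l))
              - m p * (∫ x, gaussianDensity m P x ^ β * Real.exp ((1 - β) * V x) * x l)) := by
    intro k l
    rw [hsplitgen m k (fun x => x l) (fun p => by
      refine hIw m _ (((measurable_pi_apply p).sub measurable_const).mul (measurable_pi_apply l))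
        (‖m‖ + 1) fun x => ?_
      have h1 : |x p| ≤ ‖x‖ := by rw [← Real.norm_eq_abs]; exact norm_le_pi_norm x p
      have h2 : |m p| ≤ ‖m‖ := by rw [← Real.norm_eq_abs]; exact norm_le_pi_norm m p
      have h4 : |x l| ≤ ‖x‖ := by rw [← Real.norm_eq_abs]; exact norm_le_pi_norm x l
      have h3 : |(x p - m p) * x l| ≤ (‖x‖ + ‖m‖) * ‖x‖ := by
        rw [abs_mul]
        refine mul_le_mul ?_ h4 (abs_nonneg _) (by positivity)
        calc |x p - m p| ≤ |x p| + |m p| := abs_sub _ _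
          _ ≤ ‖x‖ + ‖m‖ := by linarith
      nlinarith [norm_nonneg x, norm_nonneg m, sq_nonneg (‖x‖ - 1)])]
    congr 1
    refine Finset.sum_congr rfl fun p _ => ?_
    congr 1
    have e2 : (fun x => gaussianDensity m P x ^ β * Real.exp ((1 - β) * V x) * ((x p - m p) * x l))
        = fun x => gaussianDensity m P x ^ β * Real.exp ((1 - β) * V x) * (x p * x l)
          - m p * (gaussianDensity m P x ^ β * Real.exp ((1 - β) * V x) * x l) := by
      funext x; ring
    rw [e2, integral_sub (hIxx m p l) ((hIx m l).const_mul (m p)), integral_const_mul]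
  -- formula for G in closed form
  have hGval : ∀ (mm : Fin d → ℝ) (k : Fin d), G mm k =
      β * (∑ p, P⁻¹ k p *
        ((∫ x, gaussianDensity mm P x ^ β * Real.exp ((1 - β) * V x) * x p) - mm p * Z mm))
        / Z mm := by
    intro mm k
    rw [hGfor mm k, hDZval mm k]
  -- the Hessian entries
  have hHval : ∀ (j k : Fin d), H j k =
      ((β * ∑ l, P⁻¹ j l *
          ((∫ x, β * ((P⁻¹ *ᵥ (x - m)) k) *
              (gaussianDensity m P x ^ β * Real.exp ((1 - β) * V x)) * x l)
            - ((if l = k then (1:ℝ) else 0) * Z m + m l *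
                (∫ x, β * ((P⁻¹ *ᵥ (x - m)) k) *
                  (gaussianDensity m P x ^ β * Real.exp ((1 - β) * V x)) * 1)))) * Z m
        - (β * ∑ l, P⁻¹ j l *
            ((∫ x, gaussianDensity m P x ^ β * Real.exp ((1 - β) * V x) * x l) - m l * Z m)) *
          (∫ x, β * ((P⁻¹ *ᵥ (x - m)) k) *
            (gaussianDensity m P x ^ β * Real.exp ((1 - β) * V x)) * 1)) / Z m ^ 2 := by
    intro j k
    refine (hH j k).unique ?_
    have efun : (fun t => G (Function.update m k t) j) = fun t =>
        β * (∑ p, P⁻¹ j p *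
          ((∫ x, gaussianDensity (Function.update m k t) P x ^ β * Real.exp ((1 - β) * V x) * x p)
            - (Function.update m k t) p * Z (Function.update m k t)))
          / Z (Function.update m k t) := funext fun t => hGval (Function.update m k t) j
    rw [efun]
    have hZd := hZder m k
    have hFd : ∀ l : Fin d, HasDerivAt (fun t => ∫ x,
        gaussianDensity (Function.update m k t) P x ^ β * Real.exp ((1 - β) * V x) * x l)
        (∫ x, β * ((P⁻¹ *ᵥ (x - m)) k) *
          (gaussianDensity m P x ^ β * Real.exp ((1 - β) * V x)) * x l) (m k) := fun l =>
      key_deriv hP hPs' hβ0 hV hmom m k (fun x => x l) (measurable_pi_apply l) (fun x => by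
        have h1 : |x l| ≤ ‖x‖ := by rw [← Real.norm_eq_abs]; exact norm_le_pi_norm x l
        linarith)
    have hcoord : ∀ l : Fin d, HasDerivAt (fun t => Function.update m k t l)
        (if l = k then (1:ℝ) else 0) (m k) := by
      intro l
      rcases eq_or_ne l k with h | h
      · subst h
        have e : (fun t => Function.update m l t l) = fun t => t :=
          funext fun t => Function.update_self l t m
        rw [e, if_pos rfl]
        exact hasDerivAt_id _
      · have e : (fun t => Function.update m k t l) = fun _ => m l :=
          funext fun t => Function.update_of_ne h t m
        rw [e, if_neg h]
        exact hasDerivAt_const _ _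
    have hterm : ∀ l : Fin d, HasDerivAt (fun t => P⁻¹ j l *
        ((∫ x, gaussianDensity (Function.update m k t) P x ^ β * Real.exp ((1 - β) * V x) * x l)
          - (Function.update m k t) l * Z (Function.update m k t)))
        (P⁻¹ j l * ((∫ x, β * ((P⁻¹ *ᵥ (x - m)) k) *
            (gaussianDensity m P x ^ β * Real.exp ((1 - β) * V x)) * x l)
          - ((if l = k then (1:ℝ) else 0) * Z m + m l *
            (∫ x, β * ((P⁻¹ *ᵥ (x - m)) k) *
              (gaussianDensity m P x ^ β * Real.exp ((1 - β) * V x)) * 1)))) (m k) := by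
      intro l
      have h := ((hFd l).sub ((hcoord l).mul hZd)).const_mul (P⁻¹ j l)
      simpa only [Function.update_eq_self, Pi.sub_apply, Pi.mul_apply] using h
    have hnum := (HasDerivAt.sum (fun l (_ : l ∈ Finset.univ) => hterm l)).const_mul β
    have hdiv := hnum.div hZd (by
      simp only [Function.update_eq_self]; exact (hZpos m).ne')
    simpa only [Function.update_eq_self, Pi.div_def, Finset.sum_apply] using hdiv
  -- first moment
  have hμF : ∀ l, μ l = (Z m)⁻¹ *
      ∫ x, gaussianDensity m P x ^ β * Real.exp ((1 - β) * V x) * x l := by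
    intro l
    rw [hμ l,
      show (fun x => (Z m)⁻¹ * (gaussianDensity m P x ^ β * Real.exp ((1 - β) * V x)) * x l)
        = fun x => (Z m)⁻¹ * (gaussianDensity m P x ^ β * Real.exp ((1 - β) * V x) * x l) from
        funext fun x => by ring,
      integral_const_mul]
  -- closed form for the Hessian entries
  have hH2 : ∀ j k : Fin d, H j k = β ^ 2 * (∑ l, P⁻¹ j l * (∑ p, P⁻¹ k p *
      ((Z m)⁻¹ * (∫ x, gaussianDensity m P x ^ β * Real.exp ((1 - β) * V x) * (x p * x l))
        - μ p * μ l))) - β * P⁻¹ j k := by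
    intro j k
    rw [hHval j k]
    have h := final_algebra P⁻¹ m
      (fun l => ∫ x, gaussianDensity m P x ^ β * Real.exp ((1 - β) * V x) * x l)
      (fun p l => ∫ x, gaussianDensity m P x ^ β * Real.exp ((1 - β) * V x) * (x p * x l))
      (Z m)
      (∫ x, β * ((P⁻¹ *ᵥ (x - m)) k) *
        (gaussianDensity m P x ^ β * Real.exp ((1 - β) * V x)) * 1)
      (fun l => ∫ x, β * ((P⁻¹ *ᵥ (x - m)) k) *
        (gaussianDensity m P x ^ β * Real.exp ((1 - β) * V x)) * x l)
      j k (hZpos m).ne' β (hDZval m k) (fun l => hDFval k l)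
    rw [h]
    simp only [← hμF]
  -- covariance entries
  have hCov : ∀ j k : Fin d,
      (∫ x, (Z m)⁻¹ * (gaussianDensity m P x ^ β * Real.exp ((1 - β) * V x))
        * ((x j - μ j) * (x k - μ k)))
      = (Z m)⁻¹ * (∫ x, gaussianDensity m P x ^ β * Real.exp ((1 - β) * V x) * (x j * x k))
        - μ j * μ k := by
    intro j k
    have e : (fun x => (Z m)⁻¹ * (gaussianDensity m P x ^ β * Real.exp ((1 - β) * V x))
          * ((x j - μ j) * (x k - μ k)))
        = fun x => ((Z m)⁻¹ * (gaussianDensity m P x ^ β * Real.exp ((1 - β) * V x) * (x j * x k))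
            - ((Z m)⁻¹ * μ k) * (gaussianDensity m P x ^ β * Real.exp ((1 - β) * V x) * x j))
          - (((Z m)⁻¹ * μ j) * (gaussianDensity m P x ^ β * Real.exp ((1 - β) * V x) * x k)
            - (μ j * μ k * (Z m)⁻¹) * (gaussianDensity m P x ^ β * Real.exp ((1 - β) * V x))) := by
      funext x; ring
    have i1 : Integrable (fun x => (Z m)⁻¹ *
        (gaussianDensity m P x ^ β * Real.exp ((1 - β) * V x) * (x j * x k))
        - (Z m)⁻¹ * μ k * (gaussianDensity m P x ^ β * Real.exp ((1 - β) * V x) * x j)) :=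
      ((hIxx m j k).const_mul ((Z m)⁻¹)).sub ((hIx m j).const_mul ((Z m)⁻¹ * μ k))
    have i2 : Integrable (fun x => (Z m)⁻¹ * μ j *
        (gaussianDensity m P x ^ β * Real.exp ((1 - β) * V x) * x k)
        - μ j * μ k * (Z m)⁻¹ * (gaussianDensity m P x ^ β * Real.exp ((1 - β) * V x))) :=
      ((hIx m k).const_mul ((Z m)⁻¹ * μ j)).sub ((hZint m).const_mul (μ j * μ k * (Z m)⁻¹))
    rw [e, integral_sub i1 i2,
      integral_sub ((hIxx m j k).const_mul ((Z m)⁻¹)) ((hIx m j).const_mul ((Z m)⁻¹ * μ k)),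
      integral_sub ((hIx m k).const_mul ((Z m)⁻¹ * μ j))
        ((hZint m).const_mul (μ j * μ k * (Z m)⁻¹)),
      integral_const_mul, integral_const_mul, integral_const_mul, integral_const_mul, ← hZ m]
    rw [hμF j, hμF k]
    have hzn : Z m ≠ 0 := (hZpos m).ne'
    field_simp
    ring
  -- assemble the matrix identity
  set Cmat : Matrix (Fin d) (Fin d) ℝ := Matrix.of fun j k =>
    (Z m)⁻¹ * (∫ x, gaussianDensity m P x ^ β * Real.exp ((1 - β) * V x) * (x j * x k))
      - μ j * μ k with hCm
  have hTsym : ∀ l p : Fin d,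
      (∫ x, gaussianDensity m P x ^ β * Real.exp ((1 - β) * V x) * (x l * x p))
      = ∫ x, gaussianDensity m P x ^ β * Real.exp ((1 - β) * V x) * (x p * x l) := by
    intro l p; congr 1; funext x; ring
  have hHmat : H = β ^ 2 • (P⁻¹ * Cmat * P⁻¹) - β • P⁻¹ := by
    ext j k
    rw [hH2 j k]
    simp only [Matrix.sub_apply, Matrix.smul_apply, smul_eq_mul]
    congr 1
    congr 1
    rw [hCm]
    simp only [Matrix.mul_apply, Matrix.of_apply, Finset.mul_sum, Finset.sum_mul]
    rw [Finset.sum_comm]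
    refine Finset.sum_congr rfl fun p _ => ?_
    refine Finset.sum_congr rfl fun l _ => ?_
    rw [hAsym k p, hTsym l p]
    ring
  have hdet : IsUnit P.det := isUnit_iff_ne_zero.2 (ne_of_gt hP.det_pos)
  have h1 : P * P⁻¹ = 1 := Matrix.mul_nonsing_inv P hdet
  have h2 : P⁻¹ * P = 1 := Matrix.nonsing_inv_mul P hdet
  have hPHP : P * H * P = β ^ 2 • Cmat - β • P := by
    rw [hHmat, Matrix.mul_sub, Matrix.sub_mul, Matrix.mul_smul, Matrix.smul_mul,
      Matrix.mul_smul, Matrix.smul_mul]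
    congr 1
    · congr 1
      simp only [← Matrix.mul_assoc]
      rw [h1, Matrix.one_mul, Matrix.mul_assoc, h2, Matrix.mul_one]
    · congr 1
      rw [h1, Matrix.one_mul]
  have hfinal : (Matrix.of fun j k =>
      ∫ x, (Z m)⁻¹ * (gaussianDensity m P x ^ β * Real.exp ((1 - β) * V x))
        * ((x j - μ j) * (x k - μ k))) = Cmat := by
    ext j k
    simp only [Matrix.of_apply, hCm]
    exact hCov j k
  rw [hfinal, hPHP, smul_sub, smul_smul, smul_smul]
  have e1 : (1 / β ^ 2) * β ^ 2 = 1 := by field_simp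
  have e2 : (1 / β ^ 2) * β = 1 / β := by field_simp
  rw [e1, e2, one_smul]
  abel
end

section
/- Dual objective of the static entropic proximal problem: for strictly positive probability densities p̃ (unnormalized joint p(y,·)) and q_i, let Z(β) = ∫ p̃(x)^{1-β} q_i(x)^β dx and let q_β(x) = Z(β)^{-1} p̃^{1-β} q_i^β. Then, evaluating the Lagrangian L(q, α) = ∫ q log p̃ - ∫ q log q + α(ε - D_KL[q‖q_i]) at its maximizer q = q_β (with β = α/(1+α)) yields the dual value G(β) = βε/(1-β) + (1/(1-β)) log Z(β). -/
open MeasureTheory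

/-- Dual objective of the static entropic proximal problem: evaluating the Lagrangian
`L(q,α) = ∫ q log p̃ - ∫ q log q + α(ε - D_KL[q‖qᵢ])` at its maximizer
`q_β = Z(β)⁻¹ p̃^{1-β} qᵢ^β` with `β = α/(1+α)` gives
`G(β) = βε/(1-β) + (1/(1-β)) log Z(β)`. -/
theorem stmt17 {d : ℕ} (pt qi : (Fin d → ℝ) → ℝ)
    (hpt : ∀ x, 0 < pt x) (hptInt : Integrable pt)
    (hqi : ∀ x, 0 < qi x) (hqi1 : (∫ x, qi x) = 1)
    (ε α : ℝ) (hε : 0 ≤ ε) (hα : 0 ≤ α)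
    (β : ℝ) (hβ : β = α / (1 + α))
    (Z : ℝ) (hZ : Z = ∫ x, pt x ^ (1 - β) * qi x ^ β) (hZpos : 0 < Z)
    (qβ : (Fin d → ℝ) → ℝ)
    (hqβ : ∀ x, qβ x = Z⁻¹ * (pt x ^ (1 - β) * qi x ^ β))
    (h1 : Integrable fun x => qβ x * Real.log (pt x))
    (h2 : Integrable fun x => qβ x * Real.log (qβ x))
    (h3 : Integrable fun x => qβ x * Real.log (qβ x / qi x)) :
    (∫ x, qβ x * Real.log (pt x)) - (∫ x, qβ x * Real.log (qβ x))
        + α * (ε - ∫ x, qβ x * Real.log (qβ x / qi x))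
      = β * ε / (1 - β) + (1 / (1 - β)) * Real.log Z := by
  have hone : (0:ℝ) < 1 + α := by linarith
  have hβ1 : β < 1 := by rw [hβ, div_lt_one hone]; linarith
  have h1β : 1 - β = (1 + α)⁻¹ := by rw [hβ]; field_simp; ring
  have hαβ : α * (1 - β) = β := by rw [hβ]; field_simp; ring
  have hgInt : Integrable (fun x => pt x ^ (1 - β) * qi x ^ β) := by
    by_contra h
    rw [integral_undef h] at hZ
    linarith
  have hqβInt : Integrable qβ :=
    (hgInt.const_mul Z⁻¹).congr (Filter.Eventually.of_forall fun x => (hqβ x).symm)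
  have hqβ1 : (∫ x, qβ x) = 1 := by
    have e : (∫ x, qβ x) = Z⁻¹ * ∫ x, pt x ^ (1 - β) * qi x ^ β := by
      simp_rw [hqβ]; rw [integral_const_mul]
    rw [e, ← hZ, inv_mul_cancel₀ hZpos.ne']
  have hqβpos : ∀ x, 0 < qβ x := by
    intro x
    rw [hqβ x]
    have h1x := hpt x; have h2x := hqi x
    positivity
  have hlog : ∀ x, Real.log (qβ x) = -Real.log Z + (1 - β) * Real.log (pt x)
      + β * Real.log (qi x) := by
    intro x
    rw [hqβ x,
      Real.log_mul (inv_ne_zero hZpos.ne')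
        (mul_pos (Real.rpow_pos_of_pos (hpt x) _) (Real.rpow_pos_of_pos (hqi x) _)).ne',
      Real.log_mul (Real.rpow_pos_of_pos (hpt x) _).ne' (Real.rpow_pos_of_pos (hqi x) _).ne',
      Real.log_inv, Real.log_rpow (hpt x), Real.log_rpow (hqi x)]
    ring
  have hCint : Integrable (fun x => qβ x * Real.log (qi x)) := by
    apply (h2.sub h3).congr
    refine Filter.Eventually.of_forall fun x => ?_
    simp only [Pi.sub_apply]
    rw [Real.log_div (hqβpos x).ne' (hqi x).ne']
    ring
  have hB : (∫ x, qβ x * Real.log (qβ x))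
      = -Real.log Z + (1 - β) * (∫ x, qβ x * Real.log (pt x))
        + β * (∫ x, qβ x * Real.log (qi x)) := by
    have e : (fun x => qβ x * Real.log (qβ x))
        = fun x => (-Real.log Z) * qβ x + ((1 - β) * (qβ x * Real.log (pt x))
            + β * (qβ x * Real.log (qi x))) := by
      funext x; rw [hlog x]; ring
    have i1 : Integrable (fun x => (-Real.log Z) * qβ x) := hqβInt.const_mul _
    have i2 : Integrable (fun x => (1 - β) * (qβ x * Real.log (pt x))) := h1.const_mul _
    have i3 : Integrable (fun x => β * (qβ x * Real.log (qi x))) := hCint.const_mul _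
    have i23 : Integrable (fun x => (1 - β) * (qβ x * Real.log (pt x))
        + β * (qβ x * Real.log (qi x))) := i2.add i3
    rw [e, integral_add i1 i23, integral_add i2 i3,
      integral_const_mul, integral_const_mul, integral_const_mul, hqβ1]
    ring
  have hD : (∫ x, qβ x * Real.log (qβ x / qi x))
      = (∫ x, qβ x * Real.log (qβ x)) - (∫ x, qβ x * Real.log (qi x)) := by
    rw [← integral_sub h2 hCint]
    congr 1; funext x
    rw [Real.log_div (hqβpos x).ne' (hqi x).ne']
    ring
  have hR : β * ε / (1 - β) + (1 / (1 - β)) * Real.log Z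
      = α * ε + (1 + α) * Real.log Z := by
    rw [h1β, hβ]; field_simp
  rw [hD, hB, hR]
  linear_combination ((∫ x, qβ x * Real.log (qi x))
    - (∫ x, qβ x * Real.log (pt x))) * hαβ
end
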